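/- Let G be a connected labeled graph on V over F_q and let L be an isotropic system admitting G as a fundamental graph. Then the number N of labeled graphs H on V such that H is locally equivalent to cG for some nonzero c ∈ F_q satisfies λ(L)·N = (q − 1)·ε(L). -/

import Mathlib

open Matrix

section Defs

variable {F : Type} [Field F] {V : Type} [Fintype V] [DecidableEq V]

/-- The bilinear form on `K = F × F`: `⟨(x,y),(x',y')⟩ = x·y' − x'·y`. -/
def formK (a b : F × F) : F := a.1 * b.2 - b.1 * a.2

/-- The bilinear form on `K^V`: `⟨A,A'⟩ = Σ_v ⟨A v, A' v⟩`. -/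
def formKV (A B : V → F × F) : F := ∑ v, formK (A v) (B v)

/-- An isotropic system: an `n`-dimensional subspace of `K^V` on which the form vanishes. -/
def IsIsotropic (L : Submodule F (V → F × F)) : Prop :=
  Module.finrank F L = Fintype.card V ∧ ∀ A ∈ L, ∀ B ∈ L, formKV A B = 0

/-- A labeled graph on `V` over `F`: a symmetric matrix with zero diagonal. -/
def IsLGraph (G : Matrix V V F) : Prop := G.IsSymm ∧ ∀ v, G v v = 0

/-- The `2n × 2n` matrix `D(A,B)` with four diagonal blocks
`[[diag Z, diag T],[diag X, diag Y]]` where `A = (X,Y)`, `B = (Z,T)`. -/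
def Dmat (A B : V → F × F) : Matrix (V ⊕ V) (V ⊕ V) F :=
  fromBlocks (diagonal fun v => (B v).1) (diagonal fun v => (B v).2)
    (diagonal fun v => (A v).1) (diagonal fun v => (A v).2)

/-- The diagonal entries of `det D(A,B) = (diag Z)(diag Y) − (diag X)(diag T)`. -/
def detD (A B : V → F × F) (v : V) : F := (B v).1 * (A v).2 - (A v).1 * (B v).2

/-- The `v`-th row of the `n × 2n` matrix `(I | G) · D(A,B)` viewed as a vector in `K^V`. -/
def presRow (G : Matrix V V F) (A B : V → F × F) (v : V) : V → F × F :=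
  fun w => ((fromCols (1 : Matrix V V F) G * Dmat A B) v (Sum.inl w),
            (fromCols (1 : Matrix V V F) G * Dmat A B) v (Sum.inr w))

/-- `(G, A, B)` is a graphic presentation of the isotropic system `L`:
`G` is a labeled graph, `det D(A,B) = c·I` with `c ≠ 0`, and the rows of
`(I | G)·D(A,B)` form a basis of `L`. -/
def IsGraphicPresentation (L : Submodule F (V → F × F)) (G : Matrix V V F)
    (A B : V → F × F) : Prop :=
  IsLGraph G ∧ (∃ c : F, c ≠ 0 ∧ ∀ v, detD A B v = c) ∧
  LinearIndependent F (presRow G A B) ∧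
  Submodule.span F (Set.range (presRow G A B)) = L

/-- `G` is a fundamental graph of `L`. -/
def IsFundamental (L : Submodule F (V → F × F)) (G : Matrix V V F) : Prop :=
  ∃ A B, IsGraphicPresentation L G A B

/-- The local complementation operation `G *_r v`. -/
def starOp (G : Matrix V V F) (r : F) (v : V) : Matrix V V F :=
  Matrix.of fun u w => if u = v ∨ w = v ∨ u = w then G u w else G u w + r * G v u * G v w

/-- The operation `G ∘_s v`, multiplying the edges at `v` by `s`. -/
def circOp (G : Matrix V V F) (s : F) (v : V) : Matrix V V F :=
  Matrix.of fun u w => if u = v ∨ w = v then s * G u w else G u w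

/-- One local operation. -/
def LocalStep (G H : Matrix V V F) : Prop :=
  (∃ v r, H = starOp G r v) ∨ (∃ v s, s ≠ (0 : F) ∧ H = circOp G s v)

/-- Two labeled graphs are locally equivalent if one is obtained from the other by a
finite sequence of operations `*_r v` and `∘_s v`. -/
def LocallyEquivalent (G H : Matrix V V F) : Prop :=
  Relation.ReflTransGen LocalStep G H

/-- A complete vector: all coordinates nonzero. -/
def CompleteVec (A : V → F × F) : Prop := ∀ v, A v ≠ 0

/-- `E_{v,x}`: the vector equal to `x` at `v` and `0` elsewhere. -/
def Ev (v : V) (x : F × F) : V → F × F := fun w => if w = v then x else 0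

/-- `Â`: the span of the vectors `A_v = E_{v, A v}`. -/
def hatSub (A : V → F × F) : Submodule F (V → F × F) :=
  Submodule.span F (Set.range fun v => Ev v (A v))

/-- An Eulerian vector of `L`: a complete vector with `Â ∩ L = 0`. -/
def IsEulerian (L : Submodule F (V → F × F)) (A : V → F × F) : Prop :=
  CompleteVec A ∧ hatSub A ⊓ L = ⊥

/-- `ε(L)`: the number of Eulerian vectors of `L`. -/
noncomputable def eulerCount (L : Submodule F (V → F × F)) : ℕ :=
  Set.ncard {A | IsEulerian L A}

/-- The number of pairs `(A,B)` such that `(G,A,B)` is a graphic presentation of `L`. -/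
noncomputable def lamCount (L : Submodule F (V → F × F)) (G : Matrix V V F) : ℕ :=
  Set.ncard {p : (V → F × F) × (V → F × F) | IsGraphicPresentation L G p.1 p.2}

/-- The number of graphic presentations (triples `(G,A,B)`) of `L`. -/
noncomputable def presCount (L : Submodule F (V → F × F)) : ℕ :=
  Set.ncard {t : Matrix V V F × (V → F × F) × (V → F × F) |
    IsGraphicPresentation L t.1 t.2.1 t.2.2}

/-- `l(G)`: the number of labeled graphs locally equivalent to `G`. -/
noncomputable def locCount (G : Matrix V V F) : ℕ :=
  Set.ncard {H | LocallyEquivalent G H}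

/-- Connectivity of a labeled graph: the simple graph with edges `{v,w}` with
`g_{vw} ≠ 0` is connected. -/
def GraphConnected (G : Matrix V V F) : Prop :=
  (SimpleGraph.fromRel fun v w => G v w ≠ 0).Connected

end Defs
set_option linter.unusedSectionVars false
set_option linter.unnecessarySeqFocus false
set_option linter.unusedVariables false
set_option maxHeartbeats 1000000

section Aux1
variable {F : Type} [Field F] {V : Type} [Fintype V] [DecidableEq V]

lemma formK_self (a : F × F) : formK a a = 0 := sub_self _

lemma formK_zero_right (a : F × F) : formK a 0 = 0 := by simp [formK]

lemma formK_smul_left (t : F) (a b : F × F) : formK (t • a) b = t * formK a b := by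
  simp [formK]; ring

lemma formK_smul_right (t : F) (a b : F × F) : formK a (t • b) = t * formK a b := by
  simp [formK]; ring

lemma formK_add_left (a a' b : F × F) : formK (a + a') b = formK a b + formK a' b := by
  simp [formK]; ring

lemma formK_add_right (a b b' : F × F) : formK a (b + b') = formK a b + formK a b' := by
  simp [formK]; ring

lemma formK_anti (a b : F × F) : formK a b = - formK b a := by simp only [formK]; ring

lemma detD_eq (A B : V → F × F) (v : V) : detD A B v = formK (B v) (A v) := rfl

lemma formK_ne_zero_ne (a b : F × F) (h : formK b a ≠ 0) : a ≠ 0 := by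
  rintro rfl; exact h (by simp [formK])

lemma decompose (a b x : F × F) (hab : formK b a ≠ 0) :
    x = (formK b x / formK b a) • a + (formK x a / formK b a) • b := by
  have h := hab
  apply Prod.ext <;> (simp only [formK, Prod.smul_fst, Prod.smul_snd, Prod.fst_add, Prod.snd_add,
    smul_eq_mul] <;> simp only [formK] at h <;> rw [div_mul_eq_mul_div, div_mul_eq_mul_div, ← add_div, eq_div_iff h] <;> ring)

lemma exists_formK_eq (a : F × F) (ha : a ≠ 0) (c : F) : ∃ x : F × F, formK x a = c := by
  rcases eq_or_ne a.2 0 with h2 | h2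
  · have h1 : a.1 ≠ 0 := by
      intro h1; exact ha (Prod.ext h1 h2)
    exact ⟨(0, -c / a.1), by simp only [formK]; field_simp; ring⟩
  · exact ⟨(c / a.2, 0), by simp only [formK]; field_simp; ring⟩

lemma formK_eq_zero_iff (a x : F × F) (ha : a ≠ 0) :
    formK x a = 0 ↔ ∃ t : F, x = t • a := by
  constructor
  · intro h
    have h1 : a.1 ≠ 0 ∨ a.2 ≠ 0 := by
      by_contra hc; push_neg at hc; exact ha (Prod.ext hc.1 hc.2)
    rcases h1 with h1 | h1
    · refine ⟨x.1 / a.1, ?_⟩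
      have : x.1 * a.2 - a.1 * x.2 = 0 := h
      apply Prod.ext <;> simp only [Prod.smul_fst, Prod.smul_snd, smul_eq_mul] <;> field_simp <;> linear_combination -this
    · refine ⟨x.2 / a.2, ?_⟩
      have : x.1 * a.2 - a.1 * x.2 = 0 := h
      apply Prod.ext <;> simp only [Prod.smul_fst, Prod.smul_snd, smul_eq_mul] <;> field_simp <;> linear_combination this
  · rintro ⟨t, rfl⟩; rw [formK_smul_left, formK_self, mul_zero]

/-- Two coefficients agree when expanded in a "basis" pair `(a,b)` with `formK b a ≠ 0`. -/
lemma coeff_eq (a b : F × F) (hab : formK b a ≠ 0) {s t s' t' : F}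
    (h : s • a + t • b = s' • a + t' • b) : s = s' ∧ t = t' := by
  have h1 := congrArg (fun x => formK x a) h
  have h2 := congrArg (fun x => formK b x) h
  simp only [formK_add_left, formK_add_right, formK_smul_left, formK_smul_right,
    formK_self, mul_zero, add_zero, zero_add] at h1 h2
  refine ⟨mul_right_cancel₀ hab h2, ?_⟩
  rw [formK_anti b a] at h1
  exact mul_right_cancel₀ (by simpa [formK_anti b a] using hab) h1

end Aux1

section Aux2
variable {F : Type} [Field F] {V : Type} [Fintype V] [DecidableEq V]

/-- The `v`-th row of `(I | G)·D(A,B)` in concrete form. -/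
def rowVec (G : Matrix V V F) (A B : V → F × F) (v : V) : V → F × F :=
  fun w => (if w = v then B v else 0) + G v w • A w

lemma presRow_eq (G : Matrix V V F) (A B : V → F × F) (v : V) :
    presRow G A B v = rowVec G A B v := by
  funext w
  have h1 : (fromCols (1 : Matrix V V F) G * Dmat A B) v (Sum.inl w)
      = (if w = v then (B v).1 else 0) + G v w * (A w).1 := by
    simp only [Matrix.mul_apply, Fintype.sum_sum_type, Dmat, fromBlocks_apply₁₁,
      fromBlocks_apply₂₁, fromCols, Matrix.of_apply, Matrix.one_apply, Matrix.diagonal_apply,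
      Sum.elim_inl, Sum.elim_inr]
    rw [Finset.sum_congr rfl (fun u _ => by
      rw [show (if v = u then (1:F) else 0) * (if u = w then (B u).1 else 0)
        = if u = v then (if v = w then (B v).1 else 0) else 0 from by
          by_cases h : u = v
          · subst h; simp
          · have hvu : ¬ v = u := fun e => h e.symm; simp [h, hvu]])]
    rw [Finset.sum_ite_eq' Finset.univ v fun _ => (if v = w then (B v).1 else 0)]
    rw [Finset.sum_congr rfl (fun u _ => by
      rw [show G v u * (if u = w then (A u).1 else 0)
        = if u = w then G v w * (A w).1 else 0 from by by_cases h : u = w <;> simp [h]])]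
    rw [Finset.sum_ite_eq' Finset.univ w fun _ => G v w * (A w).1]
    simp [eq_comm]
  have h2 : (fromCols (1 : Matrix V V F) G * Dmat A B) v (Sum.inr w)
      = (if w = v then (B v).2 else 0) + G v w * (A w).2 := by
    simp only [Matrix.mul_apply, Fintype.sum_sum_type, Dmat, fromBlocks_apply₁₂,
      fromBlocks_apply₂₂, fromCols, Matrix.of_apply, Matrix.one_apply, Matrix.diagonal_apply,
      Sum.elim_inl, Sum.elim_inr]
    rw [Finset.sum_congr rfl (fun u _ => by
      rw [show (if v = u then (1:F) else 0) * (if u = w then (B u).2 else 0)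
        = if u = v then (if v = w then (B v).2 else 0) else 0 from by
          by_cases h : u = v
          · subst h; simp
          · have hvu : ¬ v = u := fun e => h e.symm; simp [h, hvu]])]
    rw [Finset.sum_ite_eq' Finset.univ v fun _ => (if v = w then (B v).2 else 0)]
    rw [Finset.sum_congr rfl (fun u _ => by
      rw [show G v u * (if u = w then (A u).2 else 0)
        = if u = w then G v w * (A w).2 else 0 from by by_cases h : u = w <;> simp [h]])]
    rw [Finset.sum_ite_eq' Finset.univ w fun _ => G v w * (A w).2]
    simp [eq_comm]
  show ((fromCols (1 : Matrix V V F) G * Dmat A B) v (Sum.inl w),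
        (fromCols (1 : Matrix V V F) G * Dmat A B) v (Sum.inr w)) = _
  rw [h1, h2]
  apply Prod.ext <;> by_cases h : w = v <;>
    simp [rowVec, h, Prod.smul_fst, Prod.smul_snd]

lemma presRow_eq' (G : Matrix V V F) (A B : V → F × F) :
    presRow G A B = rowVec G A B := funext fun v => presRow_eq G A B v

/-- Evaluating a linear combination of rows at a coordinate. -/
lemma sum_rowVec_apply (G : Matrix V V F) (A B : V → F × F) (g : V → F) (w : V) :
    (∑ v, g v • rowVec G A B v) w = g w • B w + (∑ v, g v * G v w) • A w := by
  rw [Finset.sum_apply]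
  have : ∀ v, (g v • rowVec G A B v) w
      = (if v = w then g w • B w else 0) + (g v * G v w) • A w := by
    intro v
    by_cases h : v = w
    · subst h; simp [rowVec, smul_add, smul_smul]
    · have h' : ¬(w = v) := fun e => h e.symm
      simp [rowVec, h, h', smul_add, smul_smul]
  rw [Finset.sum_congr rfl fun v _ => this v, Finset.sum_add_distrib,
    Finset.sum_ite_eq' Finset.univ w fun _ => g w • B w, ← Finset.sum_smul]
  simp

lemma rows_linindep (G : Matrix V V F) (A B : V → F × F) {c : F} (hc0 : c ≠ 0)
    (hc : ∀ v, formK (B v) (A v) = c) : LinearIndependent F (rowVec G A B) := by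
  rw [Fintype.linearIndependent_iff]
  intro g hg w
  have hw := congrFun hg w
  rw [sum_rowVec_apply] at hw
  have := congrArg (fun x => formK x (A w)) hw
  simp only [formK_add_left, formK_smul_left, formK_self, mul_zero, add_zero] at this
  rw [hc w] at this
  simp only [formK, Pi.zero_apply, Prod.fst_zero, Prod.snd_zero, zero_mul, mul_zero, sub_zero, sub_self] at this
  rcases mul_eq_zero.mp this with h | h
  · exact h
  · exact absurd h hc0

/-- The key simplification of `IsGraphicPresentation`. -/
lemma pres_iff {L : Submodule F (V → F × F)} (hL : IsIsotropic L)
    (G : Matrix V V F) (A B : V → F × F) :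
    IsGraphicPresentation L G A B ↔
      IsLGraph G ∧ (∃ c : F, c ≠ 0 ∧ ∀ v, formK (B v) (A v) = c) ∧
        ∀ v, rowVec G A B v ∈ L := by
  constructor
  · rintro ⟨h1, ⟨c, hc0, hc⟩, h3, h4⟩
    refine ⟨h1, ⟨c, hc0, hc⟩, fun v => ?_⟩
    rw [← h4, ← presRow_eq']
    exact Submodule.subset_span ⟨v, rfl⟩
  · rintro ⟨h1, ⟨c, hc0, hc⟩, hmem⟩
    have hli := rows_linindep G A B hc0 hc
    refine ⟨h1, ⟨c, hc0, hc⟩, by rw [presRow_eq']; exact hli, ?_⟩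
    rw [presRow_eq']
    have hle : Submodule.span F (Set.range (rowVec G A B)) ≤ L := by
      rw [Submodule.span_le]; rintro x ⟨v, rfl⟩; exact hmem v
    have hrank : Module.finrank F (Submodule.span F (Set.range (rowVec G A B)))
        = Fintype.card V := finrank_span_eq_card hli
    exact Submodule.eq_of_le_of_finrank_le hle (by rw [hrank, hL.1])

end Aux2

section Aux3
variable {F : Type} [Field F] {V : Type} [Fintype V] [DecidableEq V]

lemma mem_hatSub_iff (A P : V → F × F) :
    P ∈ hatSub A ↔ ∀ v, ∃ t : F, P v = t • A v := by
  constructor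
  · intro hP
    induction hP using Submodule.span_induction with
    | mem x hx =>
      obtain ⟨v, rfl⟩ := hx
      intro w
      by_cases h : w = v
      · subst h; exact ⟨1, by simp [Ev]⟩
      · exact ⟨0, by simp [Ev, h]⟩
    | zero => exact fun v => ⟨0, by simp⟩
    | add x y _ _ hx hy =>
      intro v
      obtain ⟨t, ht⟩ := hx v; obtain ⟨s, hs⟩ := hy v
      exact ⟨t + s, by simp [ht, hs, add_smul]⟩
    | smul c x _ hx =>
      intro v
      obtain ⟨t, ht⟩ := hx v
      exact ⟨c * t, by simp [ht, smul_smul]⟩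
  · intro h
    choose t ht using h
    have : P = ∑ v, t v • Ev v (A v) := by
      funext w
      rw [Finset.sum_apply]
      rw [Finset.sum_congr rfl (fun v _ => by
        show (t v • Ev v (A v)) w = if w = v then t w • A w else 0
        by_cases h : w = v
        · subst h; simp [Ev]
        · simp [Ev, h])]
      rw [Finset.sum_ite_eq Finset.univ w fun _ => t w • A w]
      simp [ht w]
    rw [this]
    exact Submodule.sum_mem _ fun v _ =>
      Submodule.smul_mem _ _ (Submodule.subset_span ⟨v, rfl⟩)

lemma hat_linindep {A : V → F × F} (hA : CompleteVec A) :
    LinearIndependent F (fun v => Ev v (A v)) := by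
  rw [Fintype.linearIndependent_iff]
  intro g hg w
  have := congrFun hg w
  rw [Finset.sum_apply] at this
  rw [Finset.sum_congr rfl (fun v _ => by
    show (g v • Ev v (A v)) w = if w = v then g w • A w else 0
    by_cases h : w = v
    · subst h; simp [Ev]
    · simp [Ev, h])] at this
  rw [Finset.sum_ite_eq Finset.univ w fun _ => g w • A w] at this
  simp only [Finset.mem_univ, if_true, Pi.zero_apply] at this
  rcases smul_eq_zero.mp this with h | h
  · exact h
  · exact absurd h (hA w)

lemma finrank_hatSub {A : V → F × F} (hA : CompleteVec A) :
    Module.finrank F (hatSub A) = Fintype.card V :=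
  finrank_span_eq_card (hat_linindep hA)

lemma finrank_KV : Module.finrank F (V → F × F) = 2 * Fintype.card V := by
  rw [Module.finrank_pi_fintype]
  simp [Module.finrank_prod, Module.finrank_self, two_mul, Finset.sum_add_distrib]
  ring

lemma hat_sup_L {L : Submodule F (V → F × F)} (hL : IsIsotropic L) {A : V → F × F}
    (hA : IsEulerian L A) : hatSub A ⊔ L = ⊤ := by
  apply Submodule.eq_top_of_finrank_eq
  have h1 := Submodule.finrank_sup_add_finrank_inf_eq (hatSub A) L
  rw [hA.2] at h1
  simp only [finrank_bot, add_zero] at h1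
  rw [h1, finrank_hatSub hA.1, hL.1, finrank_KV]
  ring

lemma existsUnique_row {L : Submodule F (V → F × F)} (hL : IsIsotropic L)
    {A : V → F × F} (hA : IsEulerian L A) (c : F) (v : V) :
    ∃! R : V → F × F, R ∈ L ∧ (∀ w, w ≠ v → ∃ t : F, R w = t • A w) ∧
      formK (R v) (A v) = c := by
  obtain ⟨x, hx⟩ := exists_formK_eq (A v) (hA.1 v) c
  have hmem : Ev v x ∈ hatSub A ⊔ L := by rw [hat_sup_L hL hA]; trivial
  obtain ⟨h, hh, l, hl, hsum⟩ := Submodule.mem_sup.mp hmem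
  have hhat := (mem_hatSub_iff A h).mp hh
  have hl_eq : ∀ w, l w = Ev v x w - h w := by
    intro w
    have hcf := congrFun hsum w
    simp only [Pi.add_apply] at hcf
    rw [← hcf]; abel
  have hlw : ∀ w, w ≠ v → ∃ t : F, l w = t • A w := by
    intro w hw
    obtain ⟨t, ht⟩ := hhat w
    refine ⟨-t, ?_⟩
    rw [hl_eq w, ht]
    simp [Ev, hw, neg_smul]
  have hlv : formK (l v) (A v) = c := by
    obtain ⟨t, ht⟩ := hhat v
    have hev : Ev v x v = x := by simp [Ev]
    rw [hl_eq v, hev, ht, show x - t • A v = x + (-t) • A v from by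
      rw [neg_smul, ← sub_eq_add_neg], formK_add_left, formK_smul_left, formK_self, hx]
    ring
  refine ⟨l, ⟨hl, hlw, hlv⟩, ?_⟩
  rintro R ⟨hR, hRw, hRv⟩
  have hdiff : R - l ∈ hatSub A ⊓ L := by
    refine Submodule.mem_inf.mpr ⟨?_, Submodule.sub_mem _ hR hl⟩
    rw [mem_hatSub_iff]
    intro w
    by_cases hw : w = v
    · subst hw
      have h0 : formK (R w - l w) (A w) = 0 := by
        rw [show R w - l w = R w + (-1 : F) • l w from by
          rw [neg_one_smul, ← sub_eq_add_neg], formK_add_left, formK_smul_left, hRv, hlv]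
        ring
      obtain ⟨t, ht⟩ := (formK_eq_zero_iff (A w) _ (hA.1 w)).mp h0
      exact ⟨t, by rw [← ht]; simp⟩
    · obtain ⟨t, ht⟩ := hRw w hw
      obtain ⟨s, hs⟩ := hlw w hw
      refine ⟨t - s, ?_⟩
      rw [Pi.sub_apply, ht, hs, sub_smul]
  rw [hA.2, Submodule.mem_bot] at hdiff
  exact sub_eq_zero.mp hdiff

end Aux3

section Aux4
variable {F : Type} [Field F] {V : Type} [Fintype V] [DecidableEq V]

open Classical in
/-- The coefficient of `x` along `a`. -/
noncomputable def coeffOf (a x : F × F) : F :=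
  if h : ∃ t : F, x = t • a then h.choose else 0

lemma coeffOf_spec {a x : F × F} (h : ∃ t : F, x = t • a) : x = coeffOf a x • a := by
  rw [coeffOf, dif_pos h]; exact h.choose_spec

lemma coeffOf_eq {a x : F × F} (ha : a ≠ 0) {t : F} (h : x = t • a) : coeffOf a x = t := by
  have h2 := coeffOf_spec ⟨t, h⟩
  have h3 : (t - coeffOf a x) • a = 0 := by
    rw [sub_smul, ← h, ← h2, sub_self]
  rcases smul_eq_zero.mp h3 with h4 | h4
  · exact (sub_eq_zero.mp h4).symm
  · exact absurd h4 ha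

open Classical in
/-- The unique row vector at `v` for Eulerian `A` and constant `c`. -/
noncomputable def theRow (L : Submodule F (V → F × F)) (A : V → F × F) (c : F) (v : V) :
    V → F × F :=
  if h : IsIsotropic L ∧ IsEulerian L A then (existsUnique_row h.1 h.2 c v).exists.choose
  else 0

variable {L : Submodule F (V → F × F)} {A : V → F × F}

lemma theRow_spec (hL : IsIsotropic L) (hA : IsEulerian L A) (c : F) (v : V) :
    theRow L A c v ∈ L ∧ (∀ w, w ≠ v → ∃ t : F, theRow L A c v w = t • A w) ∧
      formK (theRow L A c v v) (A v) = c := by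
  rw [theRow, dif_pos ⟨hL, hA⟩]
  exact (existsUnique_row hL hA c v).exists.choose_spec

lemma theRow_unique (hL : IsIsotropic L) (hA : IsEulerian L A) {c : F} {v : V}
    {R : V → F × F} (hR : R ∈ L) (hRw : ∀ w, w ≠ v → ∃ t : F, R w = t • A w)
    (hRv : formK (R v) (A v) = c) : R = theRow L A c v := by
  rw [theRow, dif_pos ⟨hL, hA⟩]
  obtain ⟨R₀, hR₀, huniq⟩ := existsUnique_row hL hA c v
  rw [huniq R ⟨hR, hRw, hRv⟩]
  rw [huniq (existsUnique_row hL hA c v).exists.choose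
    (existsUnique_row hL hA c v).exists.choose_spec]

/-- The fundamental graph of `L` associated to an Eulerian vector `A` and constant `c`. -/
noncomputable def gmat (L : Submodule F (V → F × F)) (A : V → F × F) (c : F) :
    Matrix V V F :=
  Matrix.of fun v w => if w = v then 0 else coeffOf (A w) (theRow L A c v w)

/-- The `B`-vector associated to an Eulerian vector `A` and constant `c`. -/
noncomputable def bmat (L : Submodule F (V → F × F)) (A : V → F × F) (c : F) : V → F × F :=
  fun v => theRow L A c v v

lemma gmat_diag (c : F) (v : V) : gmat L A c v v = 0 := by simp [gmat]

lemma row_eq (hL : IsIsotropic L) (hA : IsEulerian L A) (c : F) (v : V) :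
    rowVec (gmat L A c) A (bmat L A c) v = theRow L A c v := by
  funext w
  by_cases h : w = v
  · subst h
    simp [rowVec, gmat, bmat]
  · have hsp := (theRow_spec hL hA c v).2.1 w h
    rw [rowVec, gmat, bmat]
    simp only [Matrix.of_apply, if_neg h]
    rw [← coeffOf_spec hsp]
    simp [h]

lemma gmat_off (hL : IsIsotropic L) (hA : IsEulerian L A) (c : F) {v w : V} (h : w ≠ v) :
    theRow L A c v w = gmat L A c v w • A w := by
  have := congrFun (row_eq hL hA c v) w
  rw [rowVec] at this
  simp only [if_neg h, zero_add] at this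
  exact this.symm

/-- `(gmat, A, bmat)` is a graphic presentation. -/
lemma gmat_pres (hL : IsIsotropic L) (hA : IsEulerian L A) {c : F} (hc : c ≠ 0) :
    IsGraphicPresentation L (gmat L A c) A (bmat L A c) := by
  rw [pres_iff hL]
  have hsymm : ∀ v w, gmat L A c v w = gmat L A c w v := by
    intro v w
    by_cases hvw : v = w
    · subst hvw; rfl
    have h1 : w ≠ v := fun e => hvw e.symm
    have hiso := hL.2 _ ((theRow_spec hL hA c v).1) _ ((theRow_spec hL hA c w).1)
    rw [formKV] at hiso
    have hterm : ∀ u, formK (theRow L A c v u) (theRow L A c w u)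
        = (if u = v then gmat L A c w v * c else 0)
          + (if u = w then -(gmat L A c v w * c) else 0) := by
      intro u
      by_cases huv : u = v
      · subst huv
        rw [if_pos rfl, if_neg hvw]
        rw [gmat_off hL hA c (hvw : u ≠ w)]
        rw [formK_smul_right, (theRow_spec hL hA c u).2.2]
        ring
      · by_cases huw : u = w
        · subst huw
          rw [if_neg huv, if_pos rfl]
          rw [gmat_off hL hA c (huv : u ≠ v)]
          rw [formK_smul_left, formK_anti, (theRow_spec hL hA c u).2.2]
          ring
        · rw [if_neg huv, if_neg huw]
          obtain ⟨t, ht⟩ := (theRow_spec hL hA c v).2.1 u huv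
          obtain ⟨s, hs⟩ := (theRow_spec hL hA c w).2.1 u huw
          rw [ht, hs, formK_smul_left, formK_smul_right, formK_self]
          ring
    rw [Finset.sum_congr rfl fun u _ => hterm u, Finset.sum_add_distrib,
      Finset.sum_ite_eq' Finset.univ v fun _ => gmat L A c w v * c,
      Finset.sum_ite_eq' Finset.univ w fun _ => -(gmat L A c v w * c)] at hiso
    simp only [Finset.mem_univ, if_true] at hiso
    have : (gmat L A c w v - gmat L A c v w) * c = 0 := by linear_combination hiso
    rcases mul_eq_zero.mp this with h | h
    · exact (sub_eq_zero.mp h).symm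
    · exact absurd h hc
  refine ⟨⟨?_, fun v => gmat_diag c v⟩, ⟨c, hc, fun v => (theRow_spec hL hA c v).2.2⟩,
    fun v => by rw [row_eq hL hA]; exact (theRow_spec hL hA c v).1⟩
  ext v w
  exact hsymm w v

/-- A graphic presentation forces `A` to be Eulerian. -/
lemma pres_eulerian {G : Matrix V V F} {B : V → F × F} (hL : IsIsotropic L)
    (h : IsGraphicPresentation L G A B) : IsEulerian L A := by
  rw [pres_iff hL] at h
  obtain ⟨hG, ⟨c, hc0, hc⟩, hmem⟩ := h
  have hcomp : CompleteVec A := by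
    intro v hv
    apply hc0
    rw [← hc v, hv, formK_zero_right]
  refine ⟨hcomp, ?_⟩
  rw [eq_bot_iff]
  rintro P hP
  rw [Submodule.mem_inf] at hP
  obtain ⟨hPhat, hPL⟩ := hP
  -- P is a combination of the rows
  have hspan : P ∈ Submodule.span F (Set.range (rowVec G A B)) := by
    have hle : L ≤ Submodule.span F (Set.range (rowVec G A B)) := by
      have hli := rows_linindep G A B hc0 hc
      have hrank : Module.finrank F (Submodule.span F (Set.range (rowVec G A B)))
          = Fintype.card V := finrank_span_eq_card hli
      have hle2 : Submodule.span F (Set.range (rowVec G A B)) ≤ L := by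
        rw [Submodule.span_le]; rintro x ⟨v, rfl⟩; exact hmem v
      rw [Submodule.eq_of_le_of_finrank_le hle2 (by rw [hrank, hL.1])]
    exact hle hPL
  obtain ⟨g, hg⟩ := (Submodule.mem_span_range_iff_exists_fun F).mp hspan
  have hg0 : ∀ w, g w = 0 := by
    intro w
    obtain ⟨t, ht⟩ := (mem_hatSub_iff A P).mp hPhat w
    have hw := congrFun hg w
    rw [sum_rowVec_apply] at hw
    have h5 := congrArg (fun x => formK x (A w)) hw
    simp only [formK_add_left, formK_smul_left, formK_self, mul_zero, add_zero] at h5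
    rw [hc w, ht, formK_smul_left, formK_self, mul_zero] at h5
    exact (mul_eq_zero.mp h5).resolve_right hc0
  rw [Submodule.mem_bot, ← hg]
  exact Finset.sum_eq_zero fun v _ => by rw [hg0 v, zero_smul]

end Aux4

section Aux5
variable {F : Type} [Field F] {V : Type} [Fintype V] [DecidableEq V]
variable {L : Submodule F (V → F × F)} {A : V → F × F}

lemma bmat_form (hL : IsIsotropic L) (hA : IsEulerian L A) (c : F) (v : V) :
    formK (bmat L A c v) (A v) = c := (theRow_spec hL hA c v).2.2

/-- Any presentation with vector `A` and constant `c` equals the canonical one. -/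
lemma pres_eq_gmat {G : Matrix V V F} {B : V → F × F} (hL : IsIsotropic L)
    (h : IsGraphicPresentation L G A B) {c : F}
    (hc : ∀ v, formK (B v) (A v) = c) :
    G = gmat L A c ∧ B = bmat L A c := by
  have hA := pres_eulerian hL h
  rw [pres_iff hL] at h
  obtain ⟨hG, ⟨c', hc0', hc'⟩, hmem⟩ := h
  have hrow : ∀ v, rowVec G A B v = theRow L A c v := by
    intro v
    apply theRow_unique hL hA (hmem v)
    · intro w hw
      refine ⟨G v w, ?_⟩
      rw [rowVec, if_neg hw, zero_add]
    · rw [rowVec, if_pos rfl, hG.2 v, zero_smul, add_zero, hc v]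
  have hB : ∀ v, B v = bmat L A c v := by
    intro v
    have := congrFun (hrow v) v
    rw [rowVec, if_pos rfl, hG.2 v, zero_smul, add_zero] at this
    exact this
  constructor
  · ext v w
    by_cases hw : w = v
    · subst hw; rw [hG.2 w, gmat_diag]
    · have := congrFun (hrow v) w
      rw [rowVec, if_neg hw, zero_add, gmat_off hL hA c hw] at this
      have h3 : (G v w - gmat L A c v w) • A w = 0 := by
        rw [sub_smul, this, sub_self]
      rcases smul_eq_zero.mp h3 with h4 | h4
      · exact sub_eq_zero.mp h4
      · exact absurd h4 (hA.1 w)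
  · funext v; exact hB v

lemma gmat_smul (hL : IsIsotropic L) (hA : IsEulerian L A) {c : F} (hc : c ≠ 0) :
    gmat L A c = c • gmat L A 1 ∧ bmat L A c = c • bmat L A 1 := by
  have h1 := gmat_pres hL hA (one_ne_zero : (1:F) ≠ 0)
  rw [pres_iff hL] at h1
  obtain ⟨hG1, _, hmem1⟩ := h1
  have hpres : IsGraphicPresentation L (c • gmat L A 1) A (c • bmat L A 1) := by
    rw [pres_iff hL]
    refine ⟨⟨?_, ?_⟩, ⟨c, hc, ?_⟩, ?_⟩
    · show (c • gmat L A 1)ᵀ = c • gmat L A 1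
      rw [Matrix.transpose_smul, hG1.1]
    · intro v; rw [Matrix.smul_apply, hG1.2 v, smul_zero]
    · intro v
      rw [Pi.smul_apply, formK_smul_left, bmat_form hL hA 1 v, mul_one]
    · intro v
      have : rowVec (c • gmat L A 1) A (c • bmat L A 1) v
          = c • rowVec (gmat L A 1) A (bmat L A 1) v := by
        funext w
        simp only [rowVec, Pi.smul_apply, smul_add, Matrix.smul_apply, smul_eq_mul]
        congr 1
        · by_cases hw : w = v
          · rw [if_pos hw, if_pos hw]
          · rw [if_neg hw, if_neg hw, smul_zero]
        · rw [smul_smul]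
      rw [this]
      exact Submodule.smul_mem _ _ (hmem1 v)
  have := pres_eq_gmat hL hpres (c := c) (fun v => by
    rw [Pi.smul_apply, formK_smul_left, bmat_form hL hA 1 v, mul_one])
  exact ⟨this.1.symm, this.2.symm⟩

lemma gmat_symm_entry (hL : IsIsotropic L) (hA : IsEulerian L A) {c : F} (hc : c ≠ 0)
    (v w : V) : gmat L A c v w = gmat L A c w v := by
  have h := (gmat_pres hL hA hc).1.1
  conv_lhs => rw [← h]
  rfl

end Aux5

set_option linter.unreachableTactic false
set_option linter.unusedTactic false

section Aux6
variable {F : Type} [Field F] {V : Type} [Fintype V] [DecidableEq V]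
variable {L : Submodule F (V → F × F)} {A : V → F × F}

lemma rowVec_apply (G : Matrix V V F) (A B : V → F × F) (v w : V) :
    rowVec G A B v w = (if w = v then B v else 0) + G v w • A w := rfl

/-- THE MOVE LEMMA. -/
theorem move_lemma (hL : IsIsotropic L) (hA : IsEulerian L A) (v : V) {α β : F} (hα : α ≠ 0)
    (A' : V → F × F) (hA'def : A' = Function.update A v (α • A v + β • bmat L A 1 v)) :
    IsEulerian L A' ∧
    gmat L A' 1 = circOp (starOp (gmat L A 1) (β * α⁻¹) v) α⁻¹ v ∧
    bmat L A' 1 = fun u => if u = v then α⁻¹ • bmat L A 1 v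
      else bmat L A 1 u
        + ((β * α⁻¹) * (gmat L A 1 v u * gmat L A 1 v u)) • A u := by
  set g := gmat L A 1 with hg
  set B := bmat L A 1 with hB
  set r := β * α⁻¹ with hr
  set G' := circOp (starOp g r v) α⁻¹ v with hG'
  set B' : V → F × F := fun u => if u = v then α⁻¹ • B v
    else B u + (r * (g v u * g v u)) • A u with hB'
  have hpres0 := gmat_pres hL hA (one_ne_zero : (1:F) ≠ 0)
  have hmem0 := ((pres_iff hL _ _ _).mp hpres0).2.2
  have hsym : ∀ a b, g a b = g b a := gmat_symm_entry hL hA one_ne_zero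
  have hdiag : ∀ a, g a a = 0 := fun a => gmat_diag 1 a
  have hform : ∀ u, formK (B u) (A u) = 1 := bmat_form hL hA 1
  have hGvw : ∀ w, G' v w = α⁻¹ * g v w := by
    intro w
    show circOp (starOp g r v) α⁻¹ v v w = _
    simp only [circOp, starOp, Matrix.of_apply]
    simp
  have hGuv : ∀ u, u ≠ v → G' u v = α⁻¹ * g u v := by
    intro u hu
    show circOp (starOp g r v) α⁻¹ v u v = _
    simp only [circOp, starOp, Matrix.of_apply]
    simp
  have hGuw : ∀ u w, u ≠ v → w ≠ v → u ≠ w → G' u w = g u w + r * g v u * g v w := by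
    intro u w hu hw huw
    show circOp (starOp g r v) α⁻¹ v u w = _
    simp only [circOp, starOp, Matrix.of_apply]
    simp [hu, hw, huw]
  have hGuu : ∀ u, u ≠ v → G' u u = 0 := by
    intro u hu
    show circOp (starOp g r v) α⁻¹ v u u = _
    simp only [circOp, starOp, Matrix.of_apply]
    simp [hu, hdiag]
  have hA'v : A' v = α • A v + β • B v := by rw [hA'def]; simp
  have hA'ne : ∀ w, w ≠ v → A' w = A w := by
    intro w hw; rw [hA'def]; exact Function.update_of_ne hw _ _
  have hB'v : B' v = α⁻¹ • B v := by rw [hB']; simp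
  have hB'u : ∀ u, u ≠ v → B' u = B u + (r * (g v u * g v u)) • A u := by
    intro u hu; rw [hB']; simp [hu]
  -- the new rows are combinations of the old rows
  have hrow : ∀ u, rowVec G' A' B' u
      = if u = v then α⁻¹ • rowVec g A B v
        else rowVec g A B u + (r * g v u) • rowVec g A B v := by
    intro u
    by_cases hu : u = v
    · subst hu
      rw [if_pos rfl]
      funext w
      by_cases hw : w = u
      · subst hw
        rw [rowVec_apply, Pi.smul_apply, rowVec_apply, if_pos rfl, if_pos rfl,
          hGvw, hdiag, hB'v, mul_zero, zero_smul, add_zero, zero_smul, add_zero]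
      · rw [rowVec_apply, Pi.smul_apply, rowVec_apply, if_neg hw, if_neg hw,
          hGvw, hA'ne w hw, zero_add, zero_add, smul_smul]
    · rw [if_neg hu]
      funext w
      by_cases hwv : w = v
      · subst hwv
        have hwu : ¬ w = u := fun e => hu e.symm
        rw [rowVec_apply, Pi.add_apply, Pi.smul_apply, rowVec_apply, rowVec_apply,
          if_neg hwu, if_neg hwu, if_pos rfl, hGuv u hu, hA'v, hdiag, zero_add, zero_add,
          zero_smul, add_zero, hsym w u]
        match_scalars <;> field_simp [hr] <;> try ring
        rw [hr]; field_simp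
      · by_cases hwu : w = u
        · subst hwu
          rw [rowVec_apply, Pi.add_apply, Pi.smul_apply, rowVec_apply, rowVec_apply,
            if_pos rfl, if_pos rfl, if_neg hwv, hGuu w hu, hB'u w hu, hA'ne w hwv,
            zero_smul, add_zero, zero_add, hdiag w, zero_smul, add_zero]
          match_scalars <;> ring
        · have hwu' : ¬ w = u := hwu
          rw [rowVec_apply, Pi.add_apply, Pi.smul_apply, rowVec_apply, rowVec_apply,
            if_neg hwu', if_neg hwu', if_neg hwv, hGuw u w hu hwv (fun e => hwu (e.symm)),
            hA'ne w hwv, zero_add, zero_add, zero_add, smul_smul]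
          match_scalars <;> field_simp <;> ring
  -- the determinant condition
  have hdet' : ∀ u, formK (B' u) (A' u) = 1 := by
    intro u
    by_cases hu : u = v
    · subst hu
      rw [hB'v, hA'v, formK_smul_left, formK_add_right, formK_smul_right, formK_smul_right,
        hform u, formK_self, mul_zero, mul_one, add_zero]
      field_simp
    · rw [hB'u u hu, hA'ne u hu, formK_add_left, formK_smul_left, formK_self,
        hform u, mul_zero, add_zero]
  -- G' is a labeled graph
  have hLG' : IsLGraph G' := by
    constructor
    · show G'ᵀ = G'
      ext a b
      rw [Matrix.transpose_apply]
      by_cases hav : a = v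
      · by_cases hbv : b = v
        · rw [hav, hbv]
        · rw [hav, hGvw, hGuv b hbv, hsym b v]
      · by_cases hbv : b = v
        · rw [hbv, hGvw, hGuv a hav, hsym v a]
        · by_cases hab : a = b
          · rw [hab]
          · rw [hGuw b a hbv hav (fun e => hab e.symm), hGuw a b hav hbv hab, hsym a b]
            ring
    · intro u
      by_cases hu : u = v
      · subst hu; rw [hGvw, hdiag, mul_zero]
      · exact hGuu u hu
  have hmem' : ∀ u, rowVec G' A' B' u ∈ L := by
    intro u
    rw [hrow]
    by_cases hu : u = v
    · rw [if_pos hu]; exact Submodule.smul_mem _ _ (hmem0 v)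
    · rw [if_neg hu]; exact Submodule.add_mem _ (hmem0 u) (Submodule.smul_mem _ _ (hmem0 v))
  have hpres' : IsGraphicPresentation L G' A' B' :=
    (pres_iff hL G' A' B').mpr ⟨hLG', ⟨1, one_ne_zero, hdet'⟩, hmem'⟩
  have hA'E : IsEulerian L A' := pres_eulerian hL hpres'
  have heq := pres_eq_gmat hL hpres' hdet'
  exact ⟨hA'E, heq.1.symm, heq.2.symm⟩

end Aux6

section Aux7
variable {F : Type} [Field F] {V : Type} [Fintype V] [DecidableEq V]
variable {L : Submodule F (V → F × F)} {A : V → F × F}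

lemma formK_zero_left (a : F × F) : formK 0 a = 0 := by simp [formK]


lemma starOp_zero (G : Matrix V V F) (v : V) : starOp G 0 v = G := by
  ext u w; simp only [starOp, Matrix.of_apply]
  split <;> ring

lemma circOp_one (G : Matrix V V F) (v : V) : circOp G 1 v = G := by
  ext u w; simp only [circOp, Matrix.of_apply]
  split <;> ring

lemma smul_starOp (G : Matrix V V F) (v : V) (r : F) {c : F} (hc : c ≠ 0) :
    c • starOp G r v = starOp (c • G) (r * c⁻¹) v := by
  ext u w
  simp only [Matrix.smul_apply, starOp, Matrix.of_apply, smul_eq_mul]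
  split
  · rfl
  · field_simp

lemma smul_circOp (G : Matrix V V F) (v : V) (c s : F) :
    c • circOp G s v = circOp (c • G) s v := by
  ext u w
  simp only [Matrix.smul_apply, circOp, Matrix.of_apply, smul_eq_mul]
  split <;> ring

lemma starOp_starOp (G : Matrix V V F) (v : V) (r : F) :
    starOp (starOp G r v) (-r) v = G := by
  ext u w
  simp only [starOp, Matrix.of_apply]
  by_cases h : u = v ∨ w = v ∨ u = w
  · rw [if_pos h, if_pos h]
  · rw [if_neg h, if_neg h]
    push_neg at h
    norm_num

lemma circOp_circOp (G : Matrix V V F) (v : V) {s : F} (hs : s ≠ 0) :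
    circOp (circOp G s v) s⁻¹ v = G := by
  ext u w
  simp only [circOp, Matrix.of_apply]
  by_cases h : u = v ∨ w = v
  · rw [if_pos h, if_pos h]; field_simp
  · rw [if_neg h, if_neg h]

lemma locEquiv_smul {X Y : Matrix V V F} {c : F} (hc : c ≠ 0)
    (h : LocallyEquivalent X Y) : LocallyEquivalent (c • X) (c • Y) := by
  induction h with
  | refl => exact Relation.ReflTransGen.refl
  | tail hsteps hstep ih =>
    refine ih.tail ?_
    rcases hstep with ⟨v, r, rfl⟩ | ⟨v, s, hs, rfl⟩
    · exact Or.inl ⟨v, r * c⁻¹, smul_starOp _ v r hc⟩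
    · exact Or.inr ⟨v, s, hs, smul_circOp _ v c s⟩

/-- The set of graphs reachable from some nonzero multiple of `G`. -/
def Reach (G : Matrix V V F) : Set (Matrix V V F) :=
  {H | ∃ c : F, c ≠ 0 ∧ LocallyEquivalent (c • G) H}

lemma reach_step {G X Y : Matrix V V F} (hX : X ∈ Reach G) (h : LocalStep X Y) :
    Y ∈ Reach G := by
  obtain ⟨c, hc, hc2⟩ := hX
  exact ⟨c, hc, hc2.tail h⟩

lemma reach_smul {G X : Matrix V V F} (hX : X ∈ Reach G) {c : F} (hc : c ≠ 0) :
    c • X ∈ Reach G := by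
  obtain ⟨c₀, hc₀, h⟩ := hX
  refine ⟨c * c₀, mul_ne_zero hc hc₀, ?_⟩
  have := locEquiv_smul hc h
  rwa [smul_smul] at this

lemma reach_move {G : Matrix V V F} (hL : IsIsotropic L) (hA : IsEulerian L A)
    (hreach : gmat L A 1 ∈ Reach G) (v : V) {α β : F} (hα : α ≠ 0)
    (A' : V → F × F) (hA'def : A' = Function.update A v (α • A v + β • bmat L A 1 v)) :
    IsEulerian L A' ∧ gmat L A' 1 ∈ Reach G := by
  obtain ⟨hE, hg, _⟩ := move_lemma hL hA v hα A' hA'def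
  refine ⟨hE, ?_⟩
  rw [hg]
  exact reach_step (reach_step hreach (Or.inl ⟨v, β * α⁻¹, rfl⟩))
    (Or.inr ⟨v, α⁻¹, inv_ne_zero hα, rfl⟩)

/-- A single move to an "unblocked" value. -/
lemma move_unblocked {G : Matrix V V F} (hL : IsIsotropic L) (hA : IsEulerian L A)
    (hreach : gmat L A 1 ∈ Reach G) (v : V) (x : F × F)
    (hnb : ¬∃ t : F, x = t • bmat L A 1 v) :
    IsEulerian L (Function.update A v x) ∧ gmat L (Function.update A v x) 1 ∈ Reach G := by
  have hab : formK (bmat L A 1 v) (A v) ≠ 0 := by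
    rw [bmat_form hL hA]; exact one_ne_zero
  have hdec := decompose (A v) (bmat L A 1 v) x hab
  rw [bmat_form hL hA] at hdec
  simp only [div_one] at hdec
  set α := formK (bmat L A 1 v) x with hαdef
  set β := formK x (A v) with hβdef
  have hα : α ≠ 0 := by
    intro h0
    rw [h0, zero_smul, zero_add] at hdec
    exact hnb ⟨β, hdec⟩
  exact reach_move hL hA hreach v hα _ (by rw [← hdec])

open Classical in
/-- The set of coordinates where `A'` is not parallel to `A`. -/
noncomputable def diffSet (A A' : V → F × F) : Finset V :=
  Finset.univ.filter (fun v => ¬∃ t : F, A' v = t • A v)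

lemma mem_diffSet {A A' : V → F × F} {v : V} :
    v ∈ diffSet A A' ↔ ¬∃ t : F, A' v = t • A v := by
  rw [diffSet]
  simp

lemma reach_rescale {G : Matrix V V F} (hL : IsIsotropic L) :
    ∀ (S : Finset V) (A : V → F × F), IsEulerian L A → gmat L A 1 ∈ Reach G →
      ∀ A' : V → F × F, CompleteVec A' → (∀ v, ∃ t : F, A' v = t • A v) →
        (∀ v ∉ S, A' v = A v) → gmat L A' 1 ∈ Reach G := by
  intro S
  induction S using Finset.induction_on with
  | empty =>
    intro A hA hreach A' hA'c h0 hout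
    have : A' = A := funext fun v => hout v (Finset.notMem_empty v)
    rwa [this]
  | @insert a S ha ih =>
    intro A hA hreach A' hA'c h0 hout
    obtain ⟨t, ht⟩ := h0 a
    have htne : t ≠ 0 := by
      rintro rfl
      exact hA'c a (by rw [ht, zero_smul])
    have hupd : Function.update A a (A' a)
        = Function.update A a (t • A a + (0:F) • bmat L A 1 a) := by
      rw [zero_smul, add_zero, ← ht]
    obtain ⟨hE1, hr1⟩ := reach_move hL hA hreach a htne (Function.update A a (A' a)) hupd
    refine ih (Function.update A a (A' a)) hE1 hr1 A' hA'c ?_ ?_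
    · intro v
      by_cases hv : v = a
      · subst hv; exact ⟨1, by simp⟩
      · rw [Function.update_of_ne hv]; exact h0 v
    · intro v hv
      by_cases hva : v = a
      · subst hva; simp
      · rw [Function.update_of_ne hva]
        exact hout v (by simp [hva, hv])

theorem reach_main {G : Matrix V V F} (hL : IsIsotropic L) :
    ∀ (d : ℕ) (A : V → F × F), IsEulerian L A → gmat L A 1 ∈ Reach G →
      ∀ A' : V → F × F, IsEulerian L A' → (diffSet A A').card ≤ d →
        gmat L A' 1 ∈ Reach G := by
  intro d
  induction d with
  | zero =>
    intro A hA hreach A' hA' hcard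
    apply reach_rescale hL Finset.univ A hA hreach A' hA'.1 ?_
      (fun v hv => absurd (Finset.mem_univ v) hv)
    intro v
    by_contra h
    have hmem : v ∈ diffSet A A' := mem_diffSet.mpr h
    rw [Finset.card_eq_zero.mp (Nat.le_zero.mp hcard)] at hmem
    exact absurd hmem (Finset.notMem_empty v)
  | succ d ih =>
    intro A hA hreach A' hA' hcard
    by_cases hle : (diffSet A A').card ≤ d
    · exact ih A hA hreach A' hA' hle
    have hne : (diffSet A A').Nonempty := by
      rw [← Finset.card_pos]; omega
    have hB1 : ∀ u, formK (bmat L A 1 u) (A u) = 1 := bmat_form hL hA 1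
    have hindep : ∀ u, formK (bmat L A 1 u) (A u) ≠ 0 := fun u => by
      rw [hB1 u]; exact one_ne_zero
    by_cases hcase : ∃ v ∈ diffSet A A', ¬∃ t : F, A' v = t • bmat L A 1 v
    · obtain ⟨v, hvmem, hnb⟩ := hcase
      obtain ⟨hE1, hr1⟩ := move_unblocked hL hA hreach v (A' v) hnb
      apply ih _ hE1 hr1 A' hA'
      have hsub : diffSet (Function.update A v (A' v)) A' ⊆ (diffSet A A').erase v := by
        intro u hu
        rw [mem_diffSet] at hu
        rw [Finset.mem_erase]
        by_cases huv : u = v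
        · exact absurd (by subst huv; exact ⟨1, by simp⟩) hu
        · exact ⟨huv, mem_diffSet.mpr (by rwa [Function.update_of_ne huv] at hu)⟩
      calc (diffSet (Function.update A v (A' v)) A').card
          ≤ ((diffSet A A').erase v).card := Finset.card_le_card hsub
        _ = (diffSet A A').card - 1 := Finset.card_erase_of_mem hvmem
        _ ≤ d := by omega
    · push_neg at hcase
      obtain ⟨v, hvmem⟩ := hne
      obtain ⟨γ, hγ⟩ := hcase v hvmem
      have hγ0 : γ ≠ 0 := by
        rintro rfl
        exact (mem_diffSet.mp hvmem) ⟨0, by rw [hγ, zero_smul, zero_smul]⟩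
      have hw : ∃ w ∈ diffSet A A', w ≠ v ∧ gmat L A 1 v w ≠ 0 := by
        by_contra hcon
        push_neg at hcon
        set R := rowVec (gmat L A 1) A (bmat L A 1) v with hR
        have hmem0 := ((pres_iff hL _ _ _).mp (gmat_pres hL hA (one_ne_zero : (1:F) ≠ 0))).2.2
        have hRL : R ∈ L := hmem0 v
        have hRv : R v = bmat L A 1 v := by
          rw [hR, rowVec_apply, if_pos rfl, gmat_diag, zero_smul, add_zero]
        have hRhat : R ∈ hatSub A' := by
          rw [mem_hatSub_iff]
          intro w
          by_cases hwv : w = v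
          · subst hwv
            refine ⟨γ⁻¹, ?_⟩
            rw [hRv, hγ, smul_smul, inv_mul_cancel₀ hγ0, one_smul]
          · rw [hR, rowVec_apply, if_neg hwv, zero_add]
            by_cases hwd : w ∈ diffSet A A'
            · rw [hcon w hwd hwv, zero_smul]
              exact ⟨0, (zero_smul F _).symm⟩
            · rw [mem_diffSet, not_not] at hwd
              obtain ⟨t, ht⟩ := hwd
              have ht0 : t ≠ 0 := by
                rintro rfl
                exact hA'.1 w (by rw [ht, zero_smul])
              refine ⟨gmat L A 1 v w * t⁻¹, ?_⟩
              rw [ht, smul_smul, mul_assoc, inv_mul_cancel₀ ht0, mul_one]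
        have hR0 : R = 0 := by
          have h2 : R ∈ hatSub A' ⊓ L := Submodule.mem_inf.mpr ⟨hRhat, hRL⟩
          rw [hA'.2] at h2
          exact (Submodule.mem_bot F).mp h2
        have hBv := hB1 v
        rw [← hRv, hR0, Pi.zero_apply, formK_zero_left] at hBv
        exact zero_ne_one hBv
      obtain ⟨w, hwmem, hwv, he⟩ := hw
      set A₁ := Function.update A v ((1:F) • A v + (1:F) • bmat L A 1 v) with hA₁
      obtain ⟨hE1, hr1⟩ := reach_move hL hA hreach v one_ne_zero A₁ rfl
      obtain ⟨_, _, hb1⟩ := move_lemma hL hA v one_ne_zero A₁ rfl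
      have hb1w := congrFun hb1 w
      rw [if_neg hwv] at hb1w
      obtain ⟨γw, hγw⟩ := hcase w hwmem
      have hγw0 : γw ≠ 0 := by
        rintro rfl
        exact (mem_diffSet.mp hwmem) ⟨0, by rw [hγw, zero_smul, zero_smul]⟩
      have hnb2 : ¬∃ t : F, A' w = t • bmat L A₁ 1 w := by
        rintro ⟨t, htt⟩
        rw [hb1w] at htt
        have hq : (0:F) • A w + γw • bmat L A 1 w
            = (t * ((1 * 1⁻¹) * (gmat L A 1 v w * gmat L A 1 v w))) • A w
              + t • bmat L A 1 w := by
          rw [zero_smul, zero_add, ← hγw, htt, smul_add, smul_smul]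
          abel
        obtain ⟨h1, h2⟩ := coeff_eq (A w) (bmat L A 1 w) (hindep w) hq
        rw [← h2] at h1
        simp [hγw0, he] at h1
      obtain ⟨hE2, hr2⟩ := move_unblocked hL hE1 hr1 w (A' w) hnb2
      apply ih _ hE2 hr2 A' hA'
      have hsub : diffSet (Function.update A₁ w (A' w)) A' ⊆ (diffSet A A').erase w := by
        intro u hu
        rw [mem_diffSet] at hu
        rw [Finset.mem_erase]
        by_cases huw : u = w
        · exact absurd (by subst huw; exact ⟨1, by simp⟩) hu
        · refine ⟨huw, ?_⟩
          by_cases huv : u = v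
          · subst huv; exact hvmem
          · refine mem_diffSet.mpr ?_
            rwa [Function.update_of_ne huw, hA₁, Function.update_of_ne huv] at hu
      calc (diffSet (Function.update A₁ w (A' w)) A').card
          ≤ ((diffSet A A').erase w).card := Finset.card_le_card hsub
        _ = (diffSet A A').card - 1 := Finset.card_erase_of_mem hwmem
        _ ≤ d := by omega

end Aux7

section Aux8
variable {F : Type} [Field F] {V : Type} [Fintype V] [DecidableEq V]
variable {L : Submodule F (V → F × F)}

/-- The set of pairs `(A,c)` giving `X` as fundamental graph. -/
def LamSet (L : Submodule F (V → F × F)) (X : Matrix V V F) : Set ((V → F × F) × F) :=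
  {p | IsEulerian L p.1 ∧ p.2 ≠ 0 ∧ gmat L p.1 p.2 = X}

lemma lam_move (hL : IsIsotropic L) {A : V → F × F} (hE : IsEulerian L A) {c : F}
    (hc : c ≠ 0) (v : V) {α β : F} (hα : α ≠ 0) :
    IsEulerian L (Function.update A v (α • A v + β • bmat L A 1 v)) ∧
    gmat L (Function.update A v (α • A v + β • bmat L A 1 v)) c
      = circOp (starOp (gmat L A c) (β * α⁻¹ * c⁻¹) v) α⁻¹ v := by
  obtain ⟨hE1, hg1, _⟩ := move_lemma hL hE v hα _ rfl
  refine ⟨hE1, ?_⟩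
  rw [(gmat_smul hL hE1 hc).1, hg1, (gmat_smul hL hE hc).1, smul_circOp,
    smul_starOp _ v _ hc]

lemma bmat_move_at (hL : IsIsotropic L) {A : V → F × F} (hE : IsEulerian L A)
    (v : V) {α β : F} (hα : α ≠ 0) :
    bmat L (Function.update A v (α • A v + β • bmat L A 1 v)) 1 v
      = α⁻¹ • bmat L A 1 v := by
  obtain ⟨_, _, hb⟩ := move_lemma hL hE v hα _ rfl
  rw [congrFun hb v, if_pos rfl]

lemma lam_step_star (hL : IsIsotropic L) (v : V) (r : F) (X : Matrix V V F) :
    Nat.card (LamSet L X) = Nat.card (LamSet L (starOp X r v)) := by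
  refine Nat.card_congr ?_
  have key : ∀ (r : F) (Z : Matrix V V F) (p : (V → F × F) × F), p ∈ LamSet L Z →
      ((Function.update p.1 v ((1:F) • p.1 v + (r * p.2) • bmat L p.1 1 v), p.2)
        ∈ LamSet L (starOp Z r v)) := by
    rintro r Z ⟨A, c⟩ ⟨hE, hc, hg⟩
    obtain ⟨hE1, hg1⟩ := lam_move hL hE hc v (α := 1) (β := r * c) one_ne_zero
    refine ⟨hE1, hc, ?_⟩
    rw [hg1, inv_one, circOp_one, hg]
    field_simp
  refine ⟨fun q => ⟨(Function.update q.1.1 v ((1:F) • q.1.1 v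
      + (r * q.1.2) • bmat L q.1.1 1 v), q.1.2), key r X q.1 q.2⟩,
    fun q => ⟨(Function.update q.1.1 v ((1:F) • q.1.1 v
      + (-r * q.1.2) • bmat L q.1.1 1 v), q.1.2), ?_⟩, ?_, ?_⟩
  · have h2 := key (-r) (starOp X r v) q.1 q.2
    rwa [starOp_starOp] at h2
  · rintro ⟨⟨A, c⟩, hq⟩
    obtain ⟨hE, hc, hg⟩ := hq
    apply Subtype.ext
    dsimp only
    set A₁ := Function.update A v ((1:F) • A v + (r * c) • bmat L A 1 v) with hA₁
    have hb1 := bmat_move_at hL hE v (α := (1:F)) (β := r * c) one_ne_zero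
    dsimp only at hb1
    rw [← hA₁] at hb1
    refine Prod.ext ?_ rfl
    funext u
    dsimp only
    by_cases hu : u = v
    · subst hu
      have hA₁u : A₁ u = (1:F) • A u + (r * c) • bmat L A 1 u := by
        rw [hA₁, Function.update_self]
      rw [Function.update_self, hb1, hA₁u]
      module
    · rw [Function.update_of_ne hu, hA₁, Function.update_of_ne hu]
  · rintro ⟨⟨A, c⟩, hq⟩
    obtain ⟨hE, hc, hg⟩ := hq
    apply Subtype.ext
    dsimp only
    set A₁ := Function.update A v ((1:F) • A v + (-r * c) • bmat L A 1 v) with hA₁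
    have hb1 := bmat_move_at hL hE v (α := (1:F)) (β := -r * c) one_ne_zero
    dsimp only at hb1
    rw [← hA₁] at hb1
    refine Prod.ext ?_ rfl
    funext u
    dsimp only
    by_cases hu : u = v
    · subst hu
      have hA₁u : A₁ u = (1:F) • A u + (-r * c) • bmat L A 1 u := by
        rw [hA₁, Function.update_self]
      rw [Function.update_self, hb1, hA₁u]
      module
    · rw [Function.update_of_ne hu, hA₁, Function.update_of_ne hu]

lemma lam_step_circ (hL : IsIsotropic L) (v : V) {s : F} (hs : s ≠ 0) (X : Matrix V V F) :
    Nat.card (LamSet L X) = Nat.card (LamSet L (circOp X s v)) := by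
  refine Nat.card_congr ?_
  have key : ∀ (s : F), s ≠ 0 → ∀ (Z : Matrix V V F) (p : (V → F × F) × F), p ∈ LamSet L Z →
      ((Function.update p.1 v (s⁻¹ • p.1 v + (0:F) • bmat L p.1 1 v), p.2)
        ∈ LamSet L (circOp Z s v)) := by
    rintro s hs Z ⟨A, c⟩ ⟨hE, hc, hg⟩
    obtain ⟨hE1, hg1⟩ := lam_move hL hE hc v (α := s⁻¹) (β := 0) (inv_ne_zero hs)
    refine ⟨hE1, hc, ?_⟩
    rw [hg1, hg, inv_inv]
    norm_num
    rw [starOp_zero]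
  refine ⟨fun q => ⟨(Function.update q.1.1 v (s⁻¹ • q.1.1 v
      + (0:F) • bmat L q.1.1 1 v), q.1.2), key s hs X q.1 q.2⟩,
    fun q => ⟨(Function.update q.1.1 v ((s⁻¹)⁻¹ • q.1.1 v
      + (0:F) • bmat L q.1.1 1 v), q.1.2), ?_⟩, ?_, ?_⟩
  · have h2 := key s⁻¹ (inv_ne_zero hs) (circOp X s v) q.1 q.2
    rwa [circOp_circOp _ _ hs] at h2
  · rintro ⟨⟨A, c⟩, hq⟩
    apply Subtype.ext
    dsimp only
    refine Prod.ext ?_ rfl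
    funext u
    dsimp only
    by_cases hu : u = v
    · subst hu
      rw [Function.update_self]
      simp [Function.update_self, smul_add, smul_smul, inv_inv, mul_inv_cancel₀ hs,
        inv_mul_cancel₀ hs]
    · rw [Function.update_of_ne hu, Function.update_of_ne hu]
  · rintro ⟨⟨A, c⟩, hq⟩
    apply Subtype.ext
    dsimp only
    refine Prod.ext ?_ rfl
    funext u
    dsimp only
    by_cases hu : u = v
    · subst hu
      rw [Function.update_self]
      simp [Function.update_self, smul_add, smul_smul, inv_inv, mul_inv_cancel₀ hs,
        inv_mul_cancel₀ hs]
    · rw [Function.update_of_ne hu, Function.update_of_ne hu]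

lemma lam_locEquiv (hL : IsIsotropic L) {X Y : Matrix V V F}
    (h : LocallyEquivalent X Y) : Nat.card (LamSet L X) = Nat.card (LamSet L Y) := by
  induction h with
  | refl => rfl
  | tail hsteps hstep ih =>
    rcases hstep with ⟨v, r, rfl⟩ | ⟨v, s, hs, rfl⟩
    · exact ih.trans (lam_step_star hL v r _)
    · exact ih.trans (lam_step_circ hL v hs _)

lemma lam_smul (hL : IsIsotropic L) {c : F} (hc : c ≠ 0) (X : Matrix V V F) :
    Nat.card (LamSet L (c • X)) = Nat.card (LamSet L X) := by
  refine Nat.card_congr ?_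
  have key : ∀ (c : F), c ≠ 0 → ∀ (Z : Matrix V V F) (p : (V → F × F) × F), p ∈ LamSet L Z →
      (p.1, c * p.2) ∈ LamSet L (c • Z) := by
    rintro c hc Z ⟨A, c'⟩ ⟨hE, hc', hg⟩
    refine ⟨hE, mul_ne_zero hc hc', ?_⟩
    rw [(gmat_smul hL hE (mul_ne_zero hc hc')).1, ← smul_smul, ← (gmat_smul hL hE hc').1, hg]
  refine ⟨fun q => ⟨(q.1.1, c⁻¹ * q.1.2), ?_⟩,
    fun q => ⟨(q.1.1, c * q.1.2), ?_⟩, ?_, ?_⟩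
  · have h2 := key c⁻¹ (inv_ne_zero hc) (c • X) q.1 q.2
    rwa [smul_smul, inv_mul_cancel₀ hc, one_smul] at h2
  · exact key c hc X q.1 q.2
  · rintro ⟨⟨A, c'⟩, hq⟩
    apply Subtype.ext
    dsimp only
    refine Prod.ext rfl ?_
    dsimp only
    field_simp
  · rintro ⟨⟨A, c'⟩, hq⟩
    apply Subtype.ext
    dsimp only
    refine Prod.ext rfl ?_
    dsimp only
    field_simp

end Aux8

section Aux9
variable {F : Type} [Field F] {V : Type} [Fintype V] [DecidableEq V] [Nonempty V]
variable {L : Submodule F (V → F × F)}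

lemma lamCount_eq (hL : IsIsotropic L) (X : Matrix V V F) :
    lamCount L X = Nat.card (LamSet L X) := by
  rw [lamCount, ← Nat.card_coe_set_eq]
  refine Nat.card_congr ?_
  classical
  have v₀ : V := Classical.arbitrary V
  refine ⟨fun q => ⟨(q.1.1, formK (q.1.2 v₀) (q.1.1 v₀)), ?_⟩,
    fun q => ⟨(q.1.1, bmat L q.1.1 q.1.2), ?_⟩, ?_, ?_⟩
  · have h : IsGraphicPresentation L X q.1.1 q.1.2 := q.2
    have h2 := h
    obtain ⟨_, ⟨c, hc0, hc⟩, _, _⟩ := h2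
    have hcs : ∀ v, formK (q.1.2 v) (q.1.1 v) = formK (q.1.2 v₀) (q.1.1 v₀) := fun v =>
      (hc v).trans (hc v₀).symm
    refine ⟨pres_eulerian hL h, ?_, ?_⟩
    · exact fun he => hc0 ((hc v₀).symm.trans he)
    · exact (pres_eq_gmat hL h hcs).1.symm
  · have hq : IsEulerian L q.1.1 ∧ q.1.2 ≠ 0 ∧ gmat L q.1.1 q.1.2 = X := q.2
    obtain ⟨hE, hc, hg⟩ := hq
    show IsGraphicPresentation L X q.1.1 (bmat L q.1.1 q.1.2)
    have h := gmat_pres hL hE hc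
    rwa [hg] at h
  · rintro ⟨⟨A, B⟩, h⟩
    apply Subtype.ext
    dsimp only
    have h2 := h
    obtain ⟨_, ⟨c, hc0, hc⟩, _, _⟩ := h2
    have hcs : ∀ v, formK (B v) (A v) = formK (B v₀) (A v₀) := fun v =>
      (hc v).trans (hc v₀).symm
    exact Prod.ext rfl (pres_eq_gmat hL h hcs).2.symm
  · rintro ⟨⟨A, c⟩, h⟩
    apply Subtype.ext
    dsimp only
    obtain ⟨hE, hc, hg⟩ := h
    exact Prod.ext rfl (bmat_form hL hE c v₀)

end Aux9

variable {F : Type} [Field F] [Fintype F] {V : Type} [Fintype V] [DecidableEq V] [Nonempty V]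


/-- `λ(L) · N = (q − 1) · ε(L)` where `N` is the number of graphs locally
equivalent to `cG` for some nonzero `c`. -/
theorem lam_mul_count_eq (hchar : ringChar F ≠ 2)
    (G : Matrix V V F) (hG : IsLGraph G) (hconn : GraphConnected G)
    (L : Submodule F (V → F × F)) (hL : IsIsotropic L) (hfund : IsFundamental L G) :
    lamCount L G *
        Set.ncard {H : Matrix V V F | ∃ c : F, c ≠ 0 ∧ LocallyEquivalent (c • G) H}
      = (Fintype.card F - 1) * eulerCount L := by
  classical
  obtain ⟨A₀, B₀, hpres₀⟩ := hfund
  have hE₀ : IsEulerian L A₀ := pres_eulerian hL hpres₀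
  have hpres₀' := hpres₀
  obtain ⟨_, ⟨c₀, hc₀, hdet₀⟩, _, _⟩ := hpres₀'
  have hdet₀' : ∀ v, formK (B₀ v) (A₀ v) = c₀ := hdet₀
  have hgm₀ : G = gmat L A₀ c₀ := (pres_eq_gmat hL hpres₀ hdet₀').1
  have hg1₀ : gmat L A₀ 1 ∈ Reach G := by
    refine ⟨c₀⁻¹, inv_ne_zero hc₀, ?_⟩
    rw [show c₀⁻¹ • G = gmat L A₀ 1 from by
      rw [hgm₀, (gmat_smul hL hE₀ hc₀).1, smul_smul, inv_mul_cancel₀ hc₀, one_smul]]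
    exact Relation.ReflTransGen.refl
  have hall : ∀ A : V → F × F, IsEulerian L A → ∀ c : F, c ≠ 0 → gmat L A c ∈ Reach G := by
    intro A hA c hc
    have h1 : gmat L A 1 ∈ Reach G :=
      reach_main hL (Fintype.card V) A₀ hE₀ hg1₀ A hA (Finset.card_le_univ _)
    rw [(gmat_smul hL hA hc).1]
    exact reach_smul h1 hc
  set T : Finset ((V → F × F) × F) :=
    Finset.univ.filter (fun p => IsEulerian L p.1 ∧ p.2 ≠ 0) with hT
  have hfib := Finset.card_eq_sum_card_fiberwise
    (f := fun p : (V → F × F) × F => gmat L p.1 p.2) (s := T) (t := Finset.univ)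
    (fun x _ => Finset.mem_univ _)
  have hfibcard : ∀ H : Matrix V V F,
      (T.filter (fun p => gmat L p.1 p.2 = H)).card = Nat.card (LamSet L H) := by
    intro H
    rw [← Fintype.card_coe, ← Nat.card_eq_fintype_card]
    refine Nat.card_congr (Equiv.subtypeEquivRight ?_)
    intro p
    simp only [hT, Finset.mem_filter, Finset.mem_univ, true_and, LamSet, Set.mem_setOf_eq,
      and_assoc]
  have hzero : ∀ H, H ∉ Reach G → Nat.card (LamSet L H) = 0 := by
    intro H hH
    have : IsEmpty (LamSet L H) := by
      rw [Set.isEmpty_coe_sort, Set.eq_empty_iff_forall_notMem]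
      rintro ⟨A, c⟩ ⟨hE, hc, hg⟩
      exact hH (hg ▸ hall A hE c hc)
    exact Nat.card_of_isEmpty
  have hconst : ∀ H ∈ Reach G, Nat.card (LamSet L H) = Nat.card (LamSet L G) := by
    rintro H ⟨c, hc, hloc⟩
    rw [← lam_locEquiv hL hloc]
    exact lam_smul hL hc G
  set RS : Finset (Matrix V V F) := Finset.univ.filter (fun H => H ∈ Reach G) with hRS
  have hsum : ∑ H : Matrix V V F, Nat.card (LamSet L H)
      = RS.card * Nat.card (LamSet L G) := by
    rw [← Finset.sum_filter_add_sum_filter_not Finset.univ (fun H => H ∈ Reach G)]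
    have h2 : ∑ H ∈ Finset.univ.filter (fun H => ¬ H ∈ Reach G),
        Nat.card (LamSet L H) = 0 :=
      Finset.sum_eq_zero fun H hH => hzero H (Finset.mem_filter.mp hH).2
    rw [h2, add_zero, ← hRS]
    rw [Finset.sum_congr rfl (fun H hH => hconst H (Finset.mem_filter.mp hH).2)]
    rw [Finset.sum_const, smul_eq_mul]
  have hTsum : T.card = RS.card * Nat.card (LamSet L G) := by
    rw [hfib, ← hsum]
    exact Finset.sum_congr rfl fun H _ => hfibcard H
  have hTcard : T.card = eulerCount L * (Fintype.card F - 1) := by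
    have hprod : T = (Finset.univ.filter (fun A : V → F × F => IsEulerian L A)) ×ˢ
        (Finset.univ.filter (fun c : F => c ≠ 0)) := by
      ext p
      simp [hT, Finset.mem_product]
    rw [hprod, Finset.card_product]
    congr 1
    · rw [eulerCount, ← Nat.card_coe_set_eq, ← Fintype.card_coe,
        ← Nat.card_eq_fintype_card]
      refine Nat.card_congr (Equiv.subtypeEquivRight ?_).symm
      intro A
      rw [Finset.mem_filter]
      simp [IsEulerian]
    · rw [Finset.filter_ne' Finset.univ (0 : F), Finset.card_erase_of_mem (Finset.mem_univ _),
        Finset.card_univ]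
  have hN : Set.ncard {H : Matrix V V F | ∃ c : F, c ≠ 0 ∧ LocallyEquivalent (c • G) H}
      = RS.card := by
    rw [← Nat.card_coe_set_eq, ← Fintype.card_coe, ← Nat.card_eq_fintype_card]
    refine Nat.card_congr (Equiv.subtypeEquivRight ?_)
    intro H
    simp only [hRS, Set.mem_setOf_eq, Finset.mem_filter, Finset.mem_univ, true_and]
    rfl
  rw [hN, lamCount_eq hL G]
  calc Nat.card (LamSet L G) * RS.card = RS.card * Nat.card (LamSet L G) := mul_comm _ _
    _ = T.card := hTsum.symm
    _ = eulerCount L * (Fintype.card F - 1) := hTcard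
    _ = (Fintype.card F - 1) * eulerCount L := mul_comm _ _
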